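/- Let β ≥ 1 be an integer, let k ≥ 0 be an integer, and define f : ℝ∖{0} → ℝ by f(a) = Q̃_{β,k}(a) / a^{2β}. Then for every real a ≠ 0, 2 f'(a) + (2β/a) f(a) = −(2k Q̃_{β,k}(a) + Q̃_{β,k+1}(a)) / a^{2β+1}. -/

import Mathlib

open Finset

/-!
Since `f = Q̃_{β,k} · a^{-2β}`, the left-hand side equals `(2a Q̃' − 2β Q̃)/a^{2β+1}`, so everything
reduces to the action of the Euler operator `a d/da` on `Q̃_{β,k}`. It multiplies the `l`-th monomial
by `β − l − k`; the part `β − k` reproduces `Q̃_{β,k}`, and the part `−l` gives `−Q̃_{β,k+1}/2`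
because the coefficients satisfy `2(l+1) c_{β,k,l+1} = c_{β,k+1,l}`.
-/

/-- The signed polynomial
`Q̃_{β,k}(x) = Σ_{l=0}^{β-k-1} (−1)^{l+k} (β+l+k−1)!/((β−l−k−1)! l!) 2^{−l} x^{β−l−k}`
(the empty sum when `k ≥ β`), as a function on `ℝ`. -/
noncomputable def Qtilde (β k : ℕ) (x : ℝ) : ℝ :=
  ∑ l ∈ Finset.range (β - k),
    (-1 : ℝ) ^ (l + k) * (Nat.factorial (β + l + k - 1) : ℝ) /
      (Nat.factorial (β - l - k - 1) * Nat.factorial l) * (1 / 2) ^ l * x ^ (β - l - k)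

noncomputable def QtildeCoeff (β k l : ℕ) : ℝ :=
  (-1 : ℝ) ^ (l + k) * (Nat.factorial (β + l + k - 1) : ℝ) /
    (Nat.factorial (β - l - k - 1) * Nat.factorial l) * (1 / 2) ^ l

lemma Qtilde_eq_sum (β k : ℕ) (x : ℝ) :
    Qtilde β k x = ∑ l ∈ range (β - k), QtildeCoeff β k l * x ^ (β - l - k) :=
  rfl

lemma two_mul_succ_mul_QtildeCoeff_succ (β k l : ℕ) :
    2 * ((l : ℝ) + 1) * QtildeCoeff β k (l + 1) = QtildeCoeff β (k + 1) l := by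
  have hfact : β + (l + 1) + k - 1 = β + l + (k + 1) - 1 := by omega
  have hfact' : β - (l + 1) - k - 1 = β - l - (k + 1) - 1 := by omega
  unfold QtildeCoeff
  rw [hfact, hfact', Nat.factorial_succ, show l + 1 + k = l + (k + 1) by omega]
  push_cast
  field_simp
  ring

lemma mul_natCast_mul_pow_sub_one {R : Type*} [CommSemiring R] (n : ℕ) (x : R) : x * (n * x ^ (n - 1)) = n * x ^ n := by
  rcases eq_or_ne n 0 with rfl | hn
  · simp
  · rw [mul_left_comm, mul_pow_sub_one hn]

lemma two_mul_sum_mul_QtildeCoeff (β k : ℕ) (x : ℝ) :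
    2 * ∑ l ∈ range (β - k), (l : ℝ) * (QtildeCoeff β k l * x ^ (β - l - k)) =
      Qtilde β (k + 1) x := by
  rcases le_or_gt β k with hβk | hkβ
  · simp [Qtilde_eq_sum, Nat.sub_eq_zero_of_le hβk, Nat.sub_eq_zero_of_le (hβk.trans k.le_succ)]
  obtain ⟨m, hm, hm'⟩ : ∃ m, β - k = m + 1 ∧ β - (k + 1) = m := ⟨β - (k + 1), by omega, rfl⟩
  rw [Qtilde_eq_sum, hm, hm', sum_range_succ', mul_add, mul_sum]
  simp only [Nat.cast_zero, zero_mul, mul_zero, add_zero]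
  refine sum_congr rfl fun l _ => ?_
  rw [← two_mul_succ_mul_QtildeCoeff_succ, show β - (l + 1) - k = β - l - (k + 1) by omega]
  push_cast
  ring

lemma hasDerivAt_Qtilde (β k : ℕ) (x : ℝ) :
    HasDerivAt (Qtilde β k)
      (∑ l ∈ range (β - k), QtildeCoeff β k l * ((β - l - k : ℕ) * x ^ (β - l - k - 1))) x := by
  simp only [funext (Qtilde_eq_sum β k)]
  exact HasDerivAt.fun_sum fun l _ => (hasDerivAt_pow _ x).const_mul _

lemma two_mul_mul_deriv_Qtilde (β k : ℕ) (x : ℝ) :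
    2 * x * deriv (Qtilde β k) x = 2 * ((β : ℝ) - k) * Qtilde β k x - Qtilde β (k + 1) x := by
  rw [(hasDerivAt_Qtilde β k x).deriv, ← two_mul_sum_mul_QtildeCoeff, Qtilde_eq_sum, mul_assoc,
    mul_sum, mul_sum, mul_sum, mul_sum, ← sum_sub_distrib]
  refine sum_congr rfl fun l hl => ?_
  have hlk : l + k ≤ β := by rw [mem_range] at hl; omega
  rw [mul_left_comm x, mul_natCast_mul_pow_sub_one, Nat.sub_sub, Nat.cast_sub hlk]
  push_cast
  ring

theorem statement9_general (β k : ℕ) (a : ℝ) (ha : a ≠ 0) :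
    2 * deriv (fun t : ℝ => Qtilde β k t / t ^ (2 * β)) a +
        (2 * (β : ℝ) / a) * (Qtilde β k a / a ^ (2 * β)) =
      -(2 * (k : ℝ) * Qtilde β k a + Qtilde β (k + 1) a) / a ^ (2 * β + 1) := by
  have hquot := (hasDerivAt_Qtilde β k a).differentiableAt.hasDerivAt.fun_div
    (hasDerivAt_pow (2 * β) a) (pow_ne_zero _ ha)
  have hEuler := two_mul_mul_deriv_Qtilde β k a
  have hpow : ((2 * β : ℕ) : ℝ) * a ^ (2 * β - 1) = (2 * β : ℕ) * a ^ (2 * β) / a := by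
    rw [← mul_natCast_mul_pow_sub_one, mul_div_cancel_left₀ _ ha]
  rw [hquot.deriv, hpow]
  push_cast
  field_simp
  linear_combination a ^ (2 * β + 1) * hEuler

/-- for integers `β ≥ 1`, `k ≥ 0` and `f(a) = Q̃_{β,k}(a)/a^{2β}`, for
every real `a ≠ 0` one has
`2 f'(a) + (2β/a) f(a) = −(2k Q̃_{β,k}(a) + Q̃_{β,k+1}(a))/a^{2β+1}`. -/
theorem statement9 (β k : ℕ) (hβ : 1 ≤ β) (a : ℝ) (ha : a ≠ 0) :
    2 * deriv (fun t : ℝ => Qtilde β k t / t ^ (2 * β)) a +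
        (2 * (β : ℝ) / a) * (Qtilde β k a / a ^ (2 * β)) =
      -(2 * (k : ℝ) * Qtilde β k a + Qtilde β (k + 1) a) / a ^ (2 * β + 1) :=
  statement9_general β k a ha
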